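/- For odd n and X ~ Binomial(n, p) with p < 1/2, the majority-vote error P(X ≥ (n+1)/2) is strictly less than p whenever n ≥ 3 and p ∈ (0, 1/2). -/
import Mathlib

noncomputable def tailSum (p : ℝ) (n k : ℕ) : ℝ :=
  ∑ i ∈ Finset.Icc k n, (n.choose i : ℝ) * p ^ i * (1 - p) ^ (n - i)

lemma tailSum_pop (p : ℝ) (n k : ℕ) (h : k ≤ n) :
    tailSum p n k = (n.choose k : ℝ) * p ^ k * (1 - p) ^ (n - k) + tailSum p n (k + 1) := by
  unfold tailSum
  rw [show Finset.Icc k n = insert k (Finset.Icc (k + 1) n) by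
    ext x; simp only [Finset.mem_insert, Finset.mem_Icc]; omega]
  rw [Finset.sum_insert (by simp [Finset.mem_Icc])]

lemma tailSum_succ (p : ℝ) (n k : ℕ) (hk : k ≤ n) :
    tailSum p (n + 1) (k + 1) = p * tailSum p n k + (1 - p) * tailSum p n (k + 1) := by
  unfold tailSum
  rw [← Finset.Ico_add_one_right_eq_Icc, ← Finset.Ico_add_one_right_eq_Icc, ← Finset.Ico_add_one_right_eq_Icc,
    Finset.sum_Ico_eq_sum_range, Finset.sum_Ico_eq_sum_range, Finset.sum_Ico_eq_sum_range,
    Finset.mul_sum, Finset.mul_sum]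
  rw [show n + 1 + 1 - (k + 1) = (n - k) + 1 by omega,
    show n + 1 - k = (n - k) + 1 by omega,
    show n + 1 - (k + 1) = n - k by omega]
  rw [Finset.sum_range_succ, Finset.sum_range_succ (fun j => p * _)]
  rw [show k + 1 + (n - k) = n + 1 by omega, show k + (n - k) = n by omega]
  simp only [Nat.choose_self, Nat.sub_self, Nat.cast_one, pow_zero]
  have h : (∑ x ∈ Finset.range (n - k),
        (((n + 1).choose (k + 1 + x) : ℝ) * p ^ (k + 1 + x) * (1 - p) ^ (n + 1 - (k + 1 + x))))
      = ∑ x ∈ Finset.range (n - k),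
        (p * ((n.choose (k + x) : ℝ) * p ^ (k + x) * (1 - p) ^ (n - (k + x)))
          + (1 - p) * ((n.choose (k + 1 + x) : ℝ) * p ^ (k + 1 + x) * (1 - p) ^ (n - (k + 1 + x)))) := by
    apply Finset.sum_congr rfl
    intro j hj
    simp only [Finset.mem_range] at hj
    rw [show k + 1 + j = (k + j) + 1 by omega, Nat.choose_succ_succ',
      show n + 1 - (k + j + 1) = (n - (k + 1 + j)) + 1 by omega,
      show n - (k + j) = (n - (k + 1 + j)) + 1 by omega,
      show k + 1 + j = (k + j) + 1 by omega]
    push_cast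
    ring
  rw [h, Finset.sum_add_distrib]
  ring

lemma step (p : ℝ) (k : ℕ) :
    tailSum p (2 * k + 3) (k + 2) = tailSum p (2 * k + 1) (k + 1)
      + ((2 * k + 1).choose k : ℝ) * p ^ (k + 2) * (1 - p) ^ (k + 1)
      - ((2 * k + 1).choose (k + 1) : ℝ) * p ^ (k + 1) * (1 - p) ^ (k + 2) := by
  have h1 := tailSum_succ p (2 * k + 2) (k + 1) (by omega)
  have h2 := tailSum_succ p (2 * k + 1) k (by omega)
  have h3 := tailSum_succ p (2 * k + 1) (k + 1) (by omega)
  have h4 := tailSum_pop p (2 * k + 1) k (by omega)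
  have h5 := tailSum_pop p (2 * k + 1) (k + 1) (by omega)
  rw [show 2 * k + 1 - k = k + 1 by omega] at h4
  rw [show 2 * k + 1 - (k + 1) = k by omega] at h5
  rw [show 2 * k + 3 = 2 * k + 2 + 1 by ring, show 2 * k + 2 = 2 * k + 1 + 1 by ring] at h1 ⊢
  rw [h1, h2, h3, h4, h5]
  ring

lemma main_lemma (p : ℝ) (hp : 0 < p) (hp2 : p < 1 / 2) (k : ℕ) :
    tailSum p (2 * k + 3) (k + 2) < p := by
  induction k with
  | zero =>
      unfold tailSum
      rw [show Finset.Icc 2 3 = {2, 3} by decide]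
      norm_num
      nlinarith [mul_pos (mul_pos hp (by linarith : (0:ℝ) < 1 - p))
        (by linarith : (0:ℝ) < 1 - 2 * p)]
  | succ k ih =>
      have hs := step p (k + 1)
      rw [show 2 * (k + 1) + 3 = 2 * (k + 1) + 3 from rfl] at hs
      rw [show 2 * (k + 1) + 1 = 2 * k + 3 by ring, show k + 1 + 1 = k + 2 by ring] at hs
      rw [show (k + 1) + 2 = k + 3 from rfl] at hs
      have hsym : (2 * k + 3).choose (k + 1) = (2 * k + 3).choose (k + 2) := by
        rw [← Nat.choose_symm (by omega : k + 1 ≤ 2 * k + 3)]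
        congr 1; omega
      have hD : (0:ℝ) ≤ ((2 * k + 3).choose (k + 2) : ℝ) * (p ^ (k + 2) * (1 - p) ^ (k + 2)) :=
        mul_nonneg (Nat.cast_nonneg _) (mul_nonneg (pow_nonneg hp.le _) (pow_nonneg (by linarith) _))
      have h12 : (0:ℝ) ≤ 1 - 2 * p := by linarith
      rw [hs, hsym, show k + 3 = (k + 2) + 1 by omega, pow_succ p (k + 2), pow_succ (1 - p) (k + 2)]
      nlinarith [mul_nonneg hD h12]

/-- For odd `n ≥ 3` and `X ~ Binomial(n, p)` with `p ∈ (0, 1/2)`, the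
majority-vote error `P(X ≥ (n+1)/2)` is strictly less than `p`. -/
theorem majority_vote_beats_single (n : ℕ) (hodd : Odd n) (hn : 3 ≤ n)
    (p : ℝ) (hp : 0 < p) (hp2 : p < 1 / 2) :
    ∑ i ∈ Finset.Icc ((n + 1) / 2) n,
        (n.choose i : ℝ) * p ^ i * (1 - p) ^ (n - i) < p := by
  obtain ⟨j, hj⟩ := hodd
  obtain ⟨k, rfl⟩ : ∃ k, n = 2 * k + 3 := ⟨j - 1, by omega⟩
  rw [show (2 * k + 3 + 1) / 2 = k + 2 by omega]
  exact main_lemma p hp hp2 k
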